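/- Let H be an inner product space over 𝕜 (𝕜 = ℝ or ℂ), u, v ∈ H, and c, C ∈ 𝕜 with Re(conj(c)·C) > 0. If Re⟨Cv − u, u − cv⟩ ≥ 0, then ‖u‖²‖v‖² − |⟨u,v⟩|² ≤ (1/4)·M(c,C)²·|⟨u,v⟩|², where M(c,C) := [((|C| − |c|)² + 4(|conj(c)·C| − Re(conj(c)·C)))/Re(conj(c)·C)]^{1/2}. -/

import Mathlib

/-!
Expanding the hypothesis gives `‖u‖² + Re(c̄C)‖v‖² ≤ Re((C + c)⟪u, v⟫) ≤ (‖C‖ + ‖c‖)|⟪u, v⟫|`,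
and AM-GM in the form `4ab ≤ (a + b)²` turns the square of the left side into a bound for
`4 Re(c̄C) ‖u‖²‖v‖²`. The identity `(M(c, C)² + 4) Re(c̄C) = (‖C‖ + ‖c‖)²` then gives
`4‖u‖²‖v‖² ≤ (M(c, C)² + 4)|⟪u, v⟫|²`.
-/

/-- The constant `M(c, C)` from Theorem 2. -/
noncomputable def grussM {𝕜 : Type*} [RCLike 𝕜] (c C : 𝕜) : ℝ :=
  Real.sqrt (((‖C‖ - ‖c‖) ^ 2 +
      4 * (‖starRingEnd 𝕜 c * C‖ - RCLike.re (starRingEnd 𝕜 c * C))) /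
    RCLike.re (starRingEnd 𝕜 c * C))

open RCLike ComplexConjugate

section InnerProductSpace

variable {𝕜 H : Type*} [RCLike 𝕜] [NormedAddCommGroup H] [InnerProductSpace 𝕜 H]

theorem re_inner_smul_sub_sub_smul (u v : H) (c C : 𝕜) :
    re (inner 𝕜 (C • v - u) (u - c • v)) =
      re ((C + c) * inner 𝕜 u v) - (‖u‖ ^ 2 + re (conj c * C) * ‖v‖ ^ 2) := by
  simp only [inner_sub_left, inner_sub_right, inner_smul_left, inner_smul_right,
    ← inner_conj_symm v u, inner_self_eq_norm_sq_to_K, map_sub, add_mul, map_add, mul_re,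
    mul_im, conj_re, conj_im, ofReal_re, ofReal_im, ← ofReal_pow]
  ring

theorem norm_sq_add_re_mul_norm_sq_le (u v : H) (c C : 𝕜)
    (h : 0 ≤ re (inner 𝕜 (C • v - u) (u - c • v))) :
    ‖u‖ ^ 2 + re (conj c * C) * ‖v‖ ^ 2 ≤ (‖C‖ + ‖c‖) * ‖inner 𝕜 u v‖ := by
  rw [re_inner_smul_sub_sub_smul] at h
  calc ‖u‖ ^ 2 + re (conj c * C) * ‖v‖ ^ 2 ≤ re ((C + c) * inner 𝕜 u v) := by linarith
    _ ≤ ‖C + c‖ * ‖inner 𝕜 u v‖ := (re_le_norm _).trans (norm_mul _ _).le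
    _ ≤ (‖C‖ + ‖c‖) * ‖inner 𝕜 u v‖ := by gcongr; exact norm_add_le _ _

theorem four_mul_re_mul_norm_sq_mul_norm_sq_le (u v : H) (c C : 𝕜)
    (hcC : 0 ≤ re (conj c * C)) (h : 0 ≤ re (inner 𝕜 (C • v - u) (u - c • v))) :
    4 * re (conj c * C) * (‖u‖ ^ 2 * ‖v‖ ^ 2) ≤ (‖C‖ + ‖c‖) ^ 2 * ‖inner 𝕜 u v‖ ^ 2 := by
  set a := ‖u‖ ^ 2
  set b := re (conj c * C) * ‖v‖ ^ 2
  have hab : a + b ≤ (‖C‖ + ‖c‖) * ‖inner 𝕜 u v‖ := norm_sq_add_re_mul_norm_sq_le u v c C h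
  calc 4 * re (conj c * C) * (a * ‖v‖ ^ 2) = 4 * a * b := by ring
    _ ≤ (a + b) ^ 2 := by nlinarith [sq_nonneg (a - b)]
    _ ≤ ((‖C‖ + ‖c‖) * ‖inner 𝕜 u v‖) ^ 2 := by gcongr
    _ = (‖C‖ + ‖c‖) ^ 2 * ‖inner 𝕜 u v‖ ^ 2 := mul_pow _ _ _

end InnerProductSpace

theorem grussM_sq_add_four_mul {𝕜 : Type*} [RCLike 𝕜] (c C : 𝕜)
    (hcC : 0 < re (conj c * C)) :
    (grussM c C ^ 2 + 4) * re (conj c * C) = (‖C‖ + ‖c‖) ^ 2 := by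
  have hle : re (conj c * C) ≤ ‖c‖ * ‖C‖ := by
    simpa only [norm_mul, norm_conj] using re_le_norm (conj c * C)
  rw [grussM, norm_mul, norm_conj,
    Real.sq_sqrt (div_nonneg (by nlinarith [sq_nonneg (‖C‖ - ‖c‖)]) hcC.le)]
  field_simp
  ring

/-- A reverse of the Schwarz inequality in squared form (inequality (2.9)). -/
theorem reverse_schwarz_sq {𝕜 H : Type*} [RCLike 𝕜] [NormedAddCommGroup H]
    [InnerProductSpace 𝕜 H] (u v : H) (c C : 𝕜)
    (hcC : 0 < RCLike.re (starRingEnd 𝕜 c * C))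
    (h : 0 ≤ RCLike.re (inner 𝕜 (C • v - u) (u - c • v))) :
    ‖u‖ ^ 2 * ‖v‖ ^ 2 - ‖(inner 𝕜 u v)‖ ^ 2 ≤
      (1 / 4 : ℝ) * grussM c C ^ 2 * ‖(inner 𝕜 u v)‖ ^ 2 := by
  have key : 4 * re (conj c * C) * (‖u‖ ^ 2 * ‖v‖ ^ 2) ≤
      4 * re (conj c * C) * ((grussM c C ^ 2 + 4) / 4 * ‖inner 𝕜 u v‖ ^ 2) := by
    calc _ ≤ (‖C‖ + ‖c‖) ^ 2 * ‖inner 𝕜 u v‖ ^ 2 :=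
          four_mul_re_mul_norm_sq_mul_norm_sq_le u v c C hcC.le h
      _ = _ := by rw [← grussM_sq_add_four_mul c C hcC]; ring
  have bound := le_of_mul_le_mul_left key (by positivity)
  linarith
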